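/- Let n ≤ m, let C ⊆ F_{q^m}^n be an F_{q^m}-linear vector rank-metric code, let Γ be a basis of F_{q^m} over F_q, and let Γ(C) ⊆ Mat_{n×m}(F_q) be the associated rank-metric code. Then C is MRD (i.e. dim_{F_{q^m}}(C) = n − d_min(C) + 1) if and only if Γ(C) is MRD (i.e. dim_{F_q}(Γ(C)) = m·(n − d_min(Γ(C)) + 1)). -/

import Mathlib

open Matrix

/-- The rank weight of `v : Fqm^n`: the dimension over `Fq` of the `Fq`-span of its entries. -/
noncomputable def rkw (Fq : Type*) [Field Fq] {Fqm : Type*} [Field Fqm] [Algebra Fq Fqm]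
    {n : ℕ} (v : Fin n → Fqm) : ℕ :=
  Module.finrank Fq (Submodule.span Fq (Set.range v))

open scoped Classical in
/-- Minimum distance of a vector rank-metric code. -/
noncomputable def dminVec (Fq : Type*) [Field Fq] {Fqm : Type*} [Field Fqm] [Algebra Fq Fqm]
    {n : ℕ} (C : Submodule Fqm (Fin n → Fqm)) : ℕ :=
  if C = ⊥ then n + 1 else sInf {r : ℕ | ∃ v ∈ C, v ≠ 0 ∧ rkw Fq v = r}

open scoped Classical in
/-- Minimum distance of a matrix rank-metric code. -/
noncomputable def dminMat {Fq : Type*} [Field Fq] {n m : ℕ}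
    (C : Submodule Fq (Matrix (Fin n) (Fin m) Fq)) : ℕ :=
  if C = ⊥ then min m n + 1
  else sInf {r : ℕ | ∃ M ∈ C, M ≠ 0 ∧ M.rank = r}

/-- The `Fq`-linear map `v ↦ Γ(v)` from `Fqm^n` to `n × m` matrices over `Fq`,
where `Γ(v) i j` is the `j`-th coordinate of `v i` in the basis `Γ`. -/
noncomputable def gammaLin {Fq Fqm : Type*} [Field Fq] [Field Fqm] [Algebra Fq Fqm]
    {n m : ℕ} (Γ : Module.Basis (Fin m) Fq Fqm) :
    (Fin n → Fqm) →ₗ[Fq] Matrix (Fin n) (Fin m) Fq where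
  toFun v := Matrix.of fun i j => Γ.repr (v i) j
  map_add' v w := by ext i j; simp
  map_smul' c v := by ext i j; simp

/-!
`Γ` is an `Fq`-linear isomorphism of `Fqm^n` onto its image that carries the `Fq`-span of the
entries of `v` onto the row space of `Γ(v)`. Hence it preserves weights, so `d_min(Γ(C)) = d_min(C)`
for `C ≠ 0`, while `dim_Fq Γ(C) = m · dim_Fqm C`; the two MRD equations then differ by the factor
`m > 0`. For `C = 0` both hold, because `n ≤ m` makes the two conventions `d_min(0)` agree.
-/

section GammaLin

variable {Fq Fqm : Type*} [Field Fq] [Field Fqm] [Algebra Fq Fqm]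
  {n m : ℕ} (Γ : Module.Basis (Fin m) Fq Fqm)

theorem gammaLin_injective : Function.Injective (gammaLin (n := n) Γ) := by
  intro v w h
  funext i
  exact Γ.repr.injective (Finsupp.ext (congrFun (congrFun h i)))

theorem rank_gammaLin (v : Fin n → Fqm) : (gammaLin Γ v).rank = rkw Fq v := by
  have row_span : Submodule.span Fq (Set.range (gammaLin Γ v).row) =
      (Submodule.span Fq (Set.range v)).map (Γ.equivFun : Fqm →ₗ[Fq] Fin m → Fq) := by
    rw [Submodule.map_span, ← Set.range_comp]
    rfl
  rw [Matrix.rank_eq_finrank_span_row, row_span, rkw]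
  exact LinearEquiv.finrank_map_eq Γ.equivFun _

variable (C : Submodule Fqm (Fin n → Fqm))

theorem map_gammaLin_eq_bot_iff :
    (C.restrictScalars Fq).map (gammaLin Γ) = ⊥ ↔ C = ⊥ :=
  ((Submodule.map_injective_of_injective (gammaLin_injective Γ)).eq_iff'
    (Submodule.map_bot _)).trans (Submodule.restrictScalars_eq_bot_iff Fq Fqm _)

theorem finrank_map_gammaLin :
    Module.finrank Fq ((C.restrictScalars Fq).map (gammaLin Γ)) = m * Module.finrank Fqm C :=
  calc Module.finrank Fq ((C.restrictScalars Fq).map (gammaLin Γ))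
      = Module.finrank Fq (C.restrictScalars Fq) :=
        (Submodule.equivMapOfInjective _ (gammaLin_injective Γ) _).symm.finrank_eq
    _ = Module.finrank Fq C :=
        ((Submodule.restrictScalarsEquiv Fq Fqm _ C).restrictScalars Fq).finrank_eq
    _ = Module.finrank Fq Fqm * Module.finrank Fqm C :=
        (Module.finrank_mul_finrank Fq Fqm C).symm
    _ = m * Module.finrank Fqm C := by
        rw [Module.finrank_eq_card_basis Γ, Fintype.card_fin]

theorem dminMat_map_gammaLin (hC : C ≠ ⊥) :
    dminMat ((C.restrictScalars Fq).map (gammaLin Γ)) = dminVec Fq C := by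
  rw [dminVec, if_neg hC, dminMat, if_neg ((map_gammaLin_eq_bot_iff Γ C).not.mpr hC)]
  congr 1
  ext r
  simp only [Set.mem_ofPred_eq, Submodule.mem_map, Submodule.restrictScalars_mem]
  constructor
  · rintro ⟨_, ⟨v, hv, rfl⟩, hv0, rfl⟩
    exact ⟨v, hv, fun h => hv0 (by rw [h, map_zero]), (rank_gammaLin Γ v).symm⟩
  · rintro ⟨v, hv, hv0, rfl⟩
    refine ⟨gammaLin Γ v, ⟨v, hv, rfl⟩, ?_, rank_gammaLin Γ v⟩
    exact (map_ne_zero_iff _ (gammaLin_injective Γ)).mpr hv0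

end GammaLin

theorem stmt8 {Fq Fqm : Type*} [Field Fq] [Field Fqm] [Algebra Fq Fqm]
    {n m : ℕ} (hnm : n ≤ m) (Γ : Module.Basis (Fin m) Fq Fqm)
    (C : Submodule Fqm (Fin n → Fqm)) :
    ((Module.finrank Fqm C : ℤ) = (n : ℤ) - (dminVec Fq C : ℤ) + 1) ↔
      ((Module.finrank Fq (Submodule.map (gammaLin Γ) (C.restrictScalars Fq)) : ℤ) =
        (m : ℤ) * ((n : ℤ) -
          (dminMat (Submodule.map (gammaLin Γ) (C.restrictScalars Fq)) : ℤ) + 1)) := by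
  by_cases hC : C = ⊥
  · have hD := (map_gammaLin_eq_bot_iff Γ C).mpr hC
    rw [dminVec, if_pos hC, dminMat, if_pos hD, hD, hC, min_eq_right hnm]
    simp
  · have hm : (m : ℤ) ≠ 0 := by
      exact_mod_cast (Fin.pos_iff_nonempty.mpr Γ.index_nonempty).ne'
    rw [dminMat_map_gammaLin Γ C hC, finrank_map_gammaLin Γ C]
    push_cast
    exact (mul_right_inj' hm).symm
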